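/- arXiv:2311.02540 — 2 statements merged into one kernel-verified Lean document; each statement's English description precedes it below -/
import Mathlib

section
/- Let G and H be countable groups, let (X,μ) be a standard probability space, and let (A,B) be an ergodic p.m.p. action of G × H on (X,μ). Then the σ-algebra of A-invariant measurable sets and the σ-algebra of B-invariant measurable sets are statistically independent: for every A-invariant measurable set C ⊆ X and every B-invariant measurable set D ⊆ X, one has μ(C ∩ D) = μ(C) · μ(D). -/
open MeasureTheory
open scoped ENNReal symmDiff

private lemma union_eq_of_symmDiff_subset {X : Type*} {s t u : Set X} (h : s ∆ t ⊆ u) :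
    s ∪ u = t ∪ u := by
  ext x
  constructor
  · rintro (hx | hx)
    · by_cases hxt : x ∈ t
      · exact Or.inl hxt
      · exact Or.inr (h (Set.mem_symmDiff.mpr (Or.inl ⟨hx, hxt⟩)))
    · exact Or.inr hx
  · rintro (hx | hx)
    · by_cases hxs : x ∈ s
      · exact Or.inl hxs
      · exact Or.inr (h (Set.mem_symmDiff.mpr (Or.inr ⟨hx, hxs⟩)))
    · exact Or.inr hx

private lemma correct_invariant {H X : Type*} [Group H] [Countable H] [MeasurableSpace X]
    (μ : Measure X) (B : H →* Equiv.Perm X) (hB : ∀ h : H, MeasurePreserving (B h) μ μ)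
    (D : Set X) (hD : MeasurableSet D) (hDB : ∀ h : H, μ ((⇑(B h) '' D) ∆ D) = 0) :
    ∃ D' : Set X, MeasurableSet D' ∧ (∀ h : H, ⇑(B h) ⁻¹' D' = D') ∧ μ (D ∆ D') = 0 := by
  have himg : ∀ h : H, ⇑(B h) ⁻¹' D = ⇑(B h⁻¹) '' D := by
    intro h
    rw [Equiv.image_eq_preimage_symm, map_inv, Equiv.Perm.inv_def, Equiv.symm_symm]
  have hpre : ∀ h : H, μ ((⇑(B h) ⁻¹' D) ∆ D) = 0 := fun h => by
    rw [himg h]; exact hDB h⁻¹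
  set N : Set X := ⋃ h : H, (⇑(B h) ⁻¹' D) ∆ D with hN_def
  have hNmeas : MeasurableSet N :=
    MeasurableSet.iUnion fun h =>
      (((hB h).measurable hD).symmDiff hD)
  have hNnull : μ N = 0 := measure_iUnion_null hpre
  set Nt : Set X := ⋃ h : H, ⇑(B h) ⁻¹' N with hNt_def
  have hNtmeas : MeasurableSet Nt := MeasurableSet.iUnion fun h => (hB h).measurable hNmeas
  have hNtnull : μ Nt = 0 :=
    measure_iUnion_null fun h => by rw [(hB h).measure_preimage hNmeas.nullMeasurableSet]; exact hNnull
  have hNtinv : ∀ h : H, ⇑(B h) ⁻¹' Nt = Nt := by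
    intro h
    ext x
    simp only [hNt_def, Set.mem_iUnion, Set.mem_preimage]
    constructor
    · rintro ⟨h', hx⟩
      refine ⟨h' * h, ?_⟩
      rwa [map_mul, Equiv.Perm.mul_apply]
    · rintro ⟨h', hx⟩
      refine ⟨h' * h⁻¹, ?_⟩
      rw [map_mul, Equiv.Perm.mul_apply, map_inv, Equiv.Perm.inv_def, Equiv.symm_apply_apply]
      exact hx
  have hNsub : N ⊆ Nt := by
    have : ⇑(B (1 : H)) ⁻¹' N ⊆ Nt := Set.subset_iUnion (fun h : H => ⇑(B h) ⁻¹' N) 1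
    simpa [map_one] using this
  refine ⟨D ∪ Nt, hD.union hNtmeas, ?_, ?_⟩
  · intro h
    rw [Set.preimage_union, hNtinv h]
    exact union_eq_of_symmDiff_subset
      ((Set.subset_iUnion (fun h : H => (⇑(B h) ⁻¹' D) ∆ D) h).trans hNsub)
  · refine measure_mono_null ?_ hNtnull
    intro x hx
    rcases Set.mem_symmDiff.mp hx with ⟨hx1, hx2⟩ | ⟨hx1, hx2⟩
    · exact absurd (Or.inl hx1) hx2
    · exact hx1.resolve_left hx2

private lemma ae_const_of_levels {X : Type*} [MeasurableSpace X] (μ : Measure X)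
    [IsProbabilityMeasure μ] (f : X → ℝ) (hf : Measurable f)
    (hlevel : ∀ q : ℚ, μ {x | (q : ℝ) ≤ f x} = 0 ∨ μ {x | (q : ℝ) ≤ f x} = 1) :
    ∃ c : ℝ, f =ᵐ[μ] fun _ => c := by
  set E : ℚ → Set X := fun q => {x | (q : ℝ) ≤ f x} with hE_def
  have hEmeas : ∀ q, MeasurableSet (E q) := fun q => measurableSet_le measurable_const hf
  set S : Set ℚ := {q | μ (E q) = 1} with hS_def
  -- S is nonempty
  have hS_ne : S.Nonempty := by
    by_contra hemp
    have h0 : ∀ q : ℚ, μ (E q) = 0 := by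
      intro q
      rcases hlevel q with h | h
      · exact h
      · exact absurd (Set.nonempty_of_mem (show q ∈ S from h)) hemp
    have huniv : (⋃ q : ℚ, E q) = Set.univ := by
      ext x
      simp only [Set.mem_iUnion, Set.mem_univ, iff_true]
      obtain ⟨q, hq⟩ := exists_rat_lt (f x)
      exact ⟨q, le_of_lt hq⟩
    have := measure_iUnion_null h0
    rw [huniv, measure_univ] at this
    exact one_ne_zero this
  -- S is bounded above
  have hS_bdd : BddAbove ((↑) '' S : Set ℝ) := by
    by_cases hq0 : ∃ q0 : ℚ, μ (E q0) = 0
    · obtain ⟨q0, hq0⟩ := hq0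
      refine ⟨(q0 : ℝ), ?_⟩
      rintro r ⟨q, hq, rfl⟩
      by_contra hlt
      push_neg at hlt
      have hsub : E q ⊆ E q0 := by
        intro x hx
        simp only [hE_def, Set.mem_setOf_eq] at hx ⊢
        exact le_trans hlt.le hx
      have : μ (E q) = 0 := measure_mono_null hsub hq0
      rw [hS_def] at hq
      simp only [Set.mem_setOf_eq] at hq
      rw [hq] at this
      exact one_ne_zero this
    · exfalso
      push_neg at hq0
      have h1 : ∀ q : ℚ, μ (E q) = 1 := by
        intro q
        rcases hlevel q with h | h
        · exact absurd h (hq0 q)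
        · exact h
      have hcompl : μ (⋃ q : ℚ, (E q)ᶜ) = 0 :=
        measure_iUnion_null fun q => (prob_compl_eq_zero_iff (hEmeas q)).mpr (h1 q)
      have huniv : (⋃ q : ℚ, (E q)ᶜ) = Set.univ := by
        ext x
        simp only [Set.mem_iUnion, Set.mem_compl_iff, Set.mem_univ, iff_true, hE_def,
          Set.mem_setOf_eq, not_le]
        obtain ⟨q, hq⟩ := exists_rat_gt (f x)
        exact ⟨q, hq⟩
      rw [huniv, measure_univ] at hcompl
      exact one_ne_zero hcompl
  set c : ℝ := sSup ((↑) '' S) with hc_def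
  refine ⟨c, ?_⟩
  have hgt : μ {x | c < f x} = 0 := by
    have hsub : {x | c < f x} ⊆ ⋃ q ∈ {q : ℚ | c < (q : ℝ)}, E q := by
      intro x hx
      simp only [Set.mem_setOf_eq] at hx
      obtain ⟨q, hq1, hq2⟩ := exists_rat_btwn hx
      refine Set.mem_biUnion hq1 ?_
      simp only [hE_def, Set.mem_setOf_eq]
      exact hq2.le
    refine measure_mono_null hsub ((measure_biUnion_null_iff (Set.to_countable _)).mpr ?_)
    intro q hq
    rcases hlevel q with h | h
    · exact h
    · exfalso
      have : (q : ℝ) ≤ c := le_csSup hS_bdd ⟨q, h, rfl⟩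
      exact absurd hq (not_lt.mpr this)
  have hlt : μ {x | f x < c} = 0 := by
    have hsub : {x | f x < c} ⊆ ⋃ q ∈ S, (E q)ᶜ := by
      intro x hx
      simp only [Set.mem_setOf_eq] at hx
      obtain ⟨r, ⟨q, hqS, rfl⟩, hr⟩ := exists_lt_of_lt_csSup (hS_ne.image _) hx
      exact Set.mem_biUnion hqS (by simpa [hE_def] using hr)
    refine measure_mono_null hsub ((measure_biUnion_null_iff (Set.to_countable _)).mpr ?_)
    intro q hq
    exact (prob_compl_eq_zero_iff (hEmeas q)).mpr hq
  rw [Filter.EventuallyEq, ae_iff]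
  refine measure_mono_null ?_ (measure_union_null hlt hgt)
  intro x hx
  simp only [Set.mem_setOf_eq] at hx ⊢
  rcases lt_or_gt_of_ne hx with h | h
  · exact Or.inl h
  · exact Or.inr h


private def invAlg {H X : Type*} [Group H] [MeasurableSpace X] (B : H →* Equiv.Perm X) :
    MeasurableSpace X where
  MeasurableSet' E := MeasurableSet E ∧ ∀ h : H, ⇑(B h) ⁻¹' E = E
  measurableSet_empty := ⟨MeasurableSet.empty, fun _ => by simp⟩
  measurableSet_compl E hE := ⟨hE.1.compl, fun h => by rw [Set.preimage_compl, hE.2 h]⟩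
  measurableSet_iUnion f hf := ⟨MeasurableSet.iUnion fun i => (hf i).1, fun h => by
    rw [Set.preimage_iUnion]; exact Set.iUnion_congr fun i => (hf i).2 h⟩


/-- Let `G` and `H` be countable groups and let `(A,B)` be an ergodic p.m.p. action of
`G × H` on a standard probability space `(X,μ)`. Then the σ-algebras of `A`-invariant and
of `B`-invariant measurable sets are statistically independent: if `C` is an `A`-invariant
measurable set and `D` is a `B`-invariant measurable set, then `μ(C ∩ D) = μ(C)·μ(D)`. -/
theorem statement3 {G H X : Type*} [Group G] [Group H] [Countable G] [Countable H]
    [MeasurableSpace X] [StandardBorelSpace X]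
    (μ : Measure X) [IsProbabilityMeasure μ]
    (A : G →* Equiv.Perm X) (B : H →* Equiv.Perm X)
    (hA : ∀ g : G, MeasurePreserving (A g) μ μ)
    (hB : ∀ h : H, MeasurePreserving (B h) μ μ)
    (hcomm : ∀ (g : G) (h : H) (x : X), A g (B h x) = B h (A g x))
    (herg : ∀ D : Set X, MeasurableSet D →
      (∀ g : G, μ ((⇑(A g) '' D) ∆ D) = 0) →
      (∀ h : H, μ ((⇑(B h) '' D) ∆ D) = 0) → μ D = 0 ∨ μ D = 1)
    (C D : Set X) (hC : MeasurableSet C) (hD : MeasurableSet D)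
    (hCA : ∀ g : G, μ ((⇑(A g) '' C) ∆ C) = 0)
    (hDB : ∀ h : H, μ ((⇑(B h) '' D) ∆ D) = 0) :
    μ (C ∩ D) = μ C * μ D := by
  classical
  obtain ⟨C', hC'meas, hC'inv, hCC'⟩ := correct_invariant μ A hA C hC hCA
  obtain ⟨D', hD'meas, hD'inv, hDD'⟩ := correct_invariant μ B hB D hD hDB
  have hCeq : μ C = μ C' := measure_congr (measure_symmDiff_eq_zero_iff.mp hCC')
  have hDeq : μ D = μ D' := measure_congr (measure_symmDiff_eq_zero_iff.mp hDD')
  have hCDeq : μ (C ∩ D) = μ (C' ∩ D') :=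
    measure_congr ((measure_symmDiff_eq_zero_iff.mp hCC').inter
      (measure_symmDiff_eq_zero_iff.mp hDD'))
  have hm : invAlg B ≤ ‹MeasurableSpace X› := by intro s hs; exact hs.1
  haveI hfin : IsFiniteMeasure (μ.trim hm) := isFiniteMeasure_trim hm
  -- symm of A g, B h
  have hAsymm : ∀ g : G, ⇑(A g).symm = ⇑(A g⁻¹) := fun g => by
    rw [map_inv, Equiv.Perm.inv_def]
  have hBsymm : ∀ h : H, ⇑(B h).symm = ⇑(B h⁻¹) := fun h => by
    rw [map_inv, Equiv.Perm.inv_def]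
  have himg : ∀ (g : G) (s : Set X), ⇑(A g) '' s = ⇑(A g⁻¹) ⁻¹' s := fun g s => by
    rw [Equiv.image_eq_preimage_symm, hAsymm g]
  have himgB : ∀ (h : H) (s : Set X), ⇑(B h) '' s = ⇑(B h⁻¹) ⁻¹' s := fun h s => by
    rw [Equiv.image_eq_preimage_symm, hBsymm h]
  -- A g is measurable from invAlg B to invAlg B
  have hmA : ∀ (g : G) (E : Set X), MeasurableSet[invAlg B] E →
      MeasurableSet[invAlg B] (⇑(A g) ⁻¹' E) := by
    intro g E hE
    refine ⟨(hA g).measurable hE.1, fun h => ?_⟩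
    have key : ∀ y, B h y ∈ E ↔ y ∈ E := fun y => by
      conv_rhs => rw [← hE.2 h]
      exact Iff.rfl
    ext x
    simp only [Set.mem_preimage, hcomm g h x]
    exact key (A g x)
  have hmeasimg : ∀ (g : G) (s : Set X), MeasurableSet[invAlg B] s →
      MeasurableSet[invAlg B] (⇑(A g) '' s) := fun g s hs => by
    rw [himg g s]; exact hmA g⁻¹ s hs
  have hμimg : ∀ (g : G) (s : Set X), MeasurableSet s → μ (⇑(A g) '' s) = μ s := fun g s hs => by
    rw [himg g s, (hA g⁻¹).measure_preimage hs.nullMeasurableSet]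
  have hC'img : ∀ g : G, ⇑(A g) '' C' = C' := fun g => by rw [himg g C', hC'inv g⁻¹]
  -- measurable equivalences
  have hembA : ∀ g : G, MeasurableEmbedding ⇑(A g) := by
    intro g
    exact MeasurableEquiv.measurableEmbedding
      { toEquiv := A g
        measurable_toFun := (hA g).measurable
        measurable_invFun := by
          show Measurable ⇑(A g).symm
          rw [hAsymm g]; exact (hA g⁻¹).measurable }
  -- the indicator function and its conditional expectation
  set ind : X → ℝ := C'.indicator fun _ => (1 : ℝ) with hind_def
  have hind_int : Integrable ind μ := (integrable_const (1 : ℝ)).indicator hC'meas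
  have hind_setint : ∀ s : Set X, MeasurableSet s →
      ∫ x in s, ind x ∂μ = (μ (s ∩ C')).toReal := by
    intro s hs
    rw [hind_def, setIntegral_indicator hC'meas, setIntegral_const, smul_eq_mul, mul_one, measureReal_def]
  set φ : X → ℝ := μ[ind|invAlg B] with hφ_def
  have hφ_int : Integrable φ μ := integrable_condExp
  have hφ_sm : StronglyMeasurable[invAlg B] φ := stronglyMeasurable_condExp
  -- invariance of φ under A
  have hφinv : ∀ g : G, (fun x => φ (A g x)) =ᵐ[μ] φ := by
    intro g
    have huniq : (fun x => φ (A g x)) =ᵐ[μ] μ[ind|invAlg B] := by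
      refine ae_eq_condExp_of_forall_setIntegral_eq hm hind_int ?_ ?_ ?_
      · intro s _ _
        exact (((hA g).integrable_comp hφ_int.aestronglyMeasurable).mpr hφ_int).integrableOn
      · intro s hs _
        have hs0 : MeasurableSet s := hm s hs
        have himgs : MeasurableSet[invAlg B] (⇑(A g) '' s) := hmeasimg g s hs
        calc ∫ x in s, φ (A g x) ∂μ
            = ∫ x in ⇑(A g) '' s, φ x ∂μ := by
              have h5 := (hA g).setIntegral_preimage_emb (hembA g) φ (⇑(A g) '' s)
              rwa [Set.preimage_image_eq s (A g).injective] at h5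
          _ = ∫ x in ⇑(A g) '' s, ind x ∂μ := setIntegral_condExp hm hind_int himgs
          _ = (μ ((⇑(A g) '' s) ∩ C')).toReal := hind_setint _ (hm _ himgs)
          _ = (μ (s ∩ C')).toReal := by
              have h6 : (⇑(A g) '' s) ∩ C' = ⇑(A g) '' (s ∩ C') := by
                rw [Set.image_inter (A g).injective, hC'img g]
              rw [h6, hμimg g _ (hs0.inter hC'meas)]
          _ = ∫ x in s, ind x ∂μ := (hind_setint s hs0).symm
      · exact StronglyMeasurable.aestronglyMeasurable (hφ_sm.comp_measurable (fun s hs => hmA g s hs))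
    exact huniq
  -- level sets are 0 or 1
  have hlevels : ∀ q : ℚ, μ {x | (q : ℝ) ≤ φ x} = 0 ∨ μ {x | (q : ℝ) ≤ φ x} = 1 := by
    intro q
    have hEqm : MeasurableSet[invAlg B] {x | (q : ℝ) ≤ φ x} :=
      hφ_sm.measurable measurableSet_Ici
    refine herg {x | (q : ℝ) ≤ φ x} (hm _ hEqm) ?_ ?_
    · intro g
      have himgE : ⇑(A g) '' {x | (q : ℝ) ≤ φ x} = {x | (q : ℝ) ≤ φ (A g⁻¹ x)} := by
        rw [himg g]; rfl
      have hnull : μ {x | φ (A g⁻¹ x) ≠ φ x} = 0 := by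
        have h7 := hφinv g⁻¹
        rw [Filter.EventuallyEq, ae_iff] at h7
        exact h7
      rw [himgE]
      refine measure_mono_null ?_ hnull
      intro x hx
      rcases Set.mem_symmDiff.mp hx with ⟨h1, h2⟩ | ⟨h1, h2⟩
      · simp only [Set.mem_setOf_eq] at h1 h2 ⊢
        exact fun heq => h2 (heq ▸ h1)
      · simp only [Set.mem_setOf_eq] at h1 h2 ⊢
        exact fun heq => h2 (heq.symm ▸ h1)
    · intro h
      have hBE : ⇑(B h) '' {x | (q : ℝ) ≤ φ x} = {x | (q : ℝ) ≤ φ x} := by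
        rw [himgB h]; exact hEqm.2 h⁻¹
      rw [hBE, symmDiff_self]
      simp
  -- φ is a.e. constant
  obtain ⟨c, hc⟩ := ae_const_of_levels μ φ (hφ_sm.measurable.mono hm le_rfl) hlevels
  have hc_val : c = (μ C').toReal := by
    have h1 : ∫ x, φ x ∂μ = (μ C').toReal := by
      rw [hφ_def, integral_condExp hm, hind_def, integral_indicator hC'meas,
        setIntegral_const, smul_eq_mul, mul_one, measureReal_def]
    have h2 : ∫ x, φ x ∂μ = c := by
      rw [integral_congr_ae hc, integral_const, measureReal_def, measure_univ, ENNReal.toReal_one, one_smul]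
    rw [← h2, h1]
  have hD'm : MeasurableSet[invAlg B] D' := ⟨hD'meas, hD'inv⟩
  have hmain : (μ (C' ∩ D')).toReal = (μ C').toReal * (μ D').toReal := by
    calc (μ (C' ∩ D')).toReal = (μ (D' ∩ C')).toReal := by rw [Set.inter_comm]
      _ = ∫ x in D', ind x ∂μ := (hind_setint D' hD'meas).symm
      _ = ∫ x in D', φ x ∂μ := (setIntegral_condExp hm hind_int hD'm).symm
      _ = (μ D').toReal • c := by
          rw [integral_congr_ae (ae_restrict_of_ae hc), setIntegral_const, measureReal_def]
      _ = (μ C').toReal * (μ D').toReal := by rw [hc_val, smul_eq_mul, mul_comm]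
  rw [hCDeq, hCeq, hDeq]
  have hfin1 : μ (C' ∩ D') ≠ ⊤ := measure_ne_top μ _
  have hfin2 : μ C' * μ D' ≠ ⊤ := ENNReal.mul_ne_top (measure_ne_top μ _) (measure_ne_top μ _)
  rw [← ENNReal.toReal_eq_toReal_iff' hfin1 hfin2, ENNReal.toReal_mul]
  exact hmain
end

section
/- Let G and H be countable groups, let (X,μ) be a standard probability space, and let (A,B) be an ergodic p.m.p. action of G × H on (X,μ). Let E_A and E_B denote the σ-algebras of A-invariant and of B-invariant measurable sets respectively. Then the composition of the conditional expectations onto E_A and then onto E_B is integration: for every ψ ∈ L¹(X,μ), E[ E[ψ | E_A] | E_B ] = ∫_X ψ dμ almost everywhere. -/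
open MeasureTheory
open scoped ENNReal symmDiff

/-- The σ-algebra of invariant measurable sets of a p.m.p. action, i.e. measurable
sets `D` with `μ(A^g D △ D) = 0` for all `g`. -/
def invariantAlg {G X : Type*} [MeasurableSpace X] (μ : Measure X)
    (A : G → Equiv.Perm X) : MeasurableSpace X :=
  MeasurableSpace.generateFrom
    {D : Set X | MeasurableSet D ∧ ∀ g : G, μ ((⇑(A g) '' D) ∆ D) = 0}

section aux

variable {X : Type*} [MeasurableSpace X] {μ : Measure X}

lemma aux_symmDiff_iUnion_subset {ι : Type*} (f g : ι → Set X) :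
    ((⋃ i, f i) ∆ (⋃ i, g i)) ⊆ ⋃ i, (f i ∆ g i) := by
  intro x hx
  rw [Set.mem_symmDiff] at hx
  rcases hx with ⟨h1, h2⟩ | ⟨h1, h2⟩ <;>
    · simp only [Set.mem_iUnion, not_exists] at h1 h2 ⊢
      obtain ⟨i, hi⟩ := h1
      exact ⟨i, by rw [Set.mem_symmDiff]; tauto⟩

/-- switching between image form and preimage form of a.e.-invariance -/
lemma aux_image_iff_preimage {G : Type*} [Group G] (A : G →* Equiv.Perm X)
    (D : Set X) :
    (∀ g : G, μ ((⇑(A g) '' D) ∆ D) = 0) ↔ (∀ g : G, μ ((⇑(A g) ⁻¹' D) ∆ D) = 0) := by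
  have h : ∀ g : G, ⇑(A g) '' D = ⇑(A g⁻¹) ⁻¹' D := by
    intro g
    rw [Equiv.image_eq_preimage_symm, map_inv]
    rfl
  constructor
  · intro H g
    have := H g⁻¹
    rwa [h, inv_inv] at this
  · intro H g
    rw [h]
    exact H g⁻¹

/-- characterization of the invariant σ-algebra: it is exactly the collection of
measurable a.e.-invariant sets (in preimage form). -/
lemma aux_measurableSet_invariantAlg {G : Type*} [Group G] (A : G →* Equiv.Perm X)
    (D : Set X) :
    MeasurableSet[invariantAlg μ (fun g : G => A g)] D ↔
      (MeasurableSet D ∧ ∀ g : G, μ ((⇑(A g) ⁻¹' D) ∆ D) = 0) := by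
  constructor
  · intro h
    refine MeasurableSpace.generateFrom_induction
      (p := fun s _ => MeasurableSet s ∧ ∀ g : G, μ ((⇑(A g) ⁻¹' s) ∆ s) = 0)
      _ ?_ ?_ ?_ ?_ D h
    · rintro t ⟨ht, hinv⟩ _
      exact ⟨ht, (aux_image_iff_preimage (μ := μ) A t).1 hinv⟩
    · exact ⟨MeasurableSet.empty, fun g => by simp⟩
    · rintro t _ ⟨ht, hinv⟩
      refine ⟨ht.compl, fun g => ?_⟩
      rw [Set.preimage_compl, compl_symmDiff_compl]
      exact hinv g
    · intro t _ ht
      refine ⟨MeasurableSet.iUnion fun i => (ht i).1, fun g => ?_⟩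
      rw [Set.preimage_iUnion]
      exact measure_mono_null (aux_symmDiff_iUnion_subset _ _)
        (measure_iUnion_null fun i => (ht i).2 g)
  · rintro ⟨hD, hinv⟩
    exact MeasurableSpace.measurableSet_generateFrom
      ⟨hD, (aux_image_iff_preimage (μ := μ) A D).2 hinv⟩

/-- A function measurable w.r.t. a sub-σ-algebra of a.e.-invariant sets is a.e. invariant. -/
lemma aux_comp_ae_eq {m : MeasurableSpace X} {T : X → X}
    (hT : ∀ D : Set X, MeasurableSet[m] D → μ ((T ⁻¹' D) ∆ D) = 0)
    {f : X → ℝ} (hf : Measurable[m] f) : (fun x => f (T x)) =ᵐ[μ] f := by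
  have hq : ∀ q : ℚ, μ ((T ⁻¹' {x | f x ≤ (q : ℝ)}) ∆ {x | f x ≤ (q : ℝ)}) = 0 := by
    intro q
    exact hT _ (hf measurableSet_Iic)
  have hN : μ (⋃ q : ℚ, (T ⁻¹' {x | f x ≤ (q : ℝ)}) ∆ {x | f x ≤ (q : ℝ)}) = 0 :=
    measure_iUnion_null hq
  rw [Filter.EventuallyEq, ae_iff]
  refine measure_mono_null ?_ hN
  intro x hx
  simp only [Set.mem_setOf_eq] at hx
  rw [Set.mem_iUnion]
  rcases lt_or_gt_of_ne hx with hlt | hlt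
  · obtain ⟨q, hq1, hq2⟩ := exists_rat_btwn hlt
    exact ⟨q, Set.mem_symmDiff.2 (Or.inl ⟨le_of_lt hq1, by simp [not_le.2 hq2]⟩)⟩
  · obtain ⟨q, hq1, hq2⟩ := exists_rat_btwn hlt
    exact ⟨q, Set.mem_symmDiff.2 (Or.inr ⟨le_of_lt hq1, by simp [not_le.2 hq2]⟩)⟩

/-- A measurable integrable-type function whose sublevel sets all have measure 0 or 1
is a.e. constant. -/
lemma aux_ae_const [IsProbabilityMeasure μ] {f : X → ℝ} (hf : Measurable f)
    (hlev : ∀ q : ℝ, μ {x | f x ≤ q} = 0 ∨ μ {x | f x ≤ q} = 1) :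
    ∃ c : ℝ, f =ᵐ[μ] fun _ => c := by
  set T : Set ℝ := {q : ℝ | μ {x | f x ≤ q} = 1} with hT
  have hup : ∀ q ∈ T, ∀ q', q ≤ q' → q' ∈ T := by
    intro q hq q' hqq'
    refine le_antisymm prob_le_one ?_
    calc (1 : ℝ≥0∞) = μ {x | f x ≤ q} := hq.symm
    _ ≤ μ {x | f x ≤ q'} := measure_mono fun x hx => le_trans hx hqq'
  have hne : T.Nonempty := by
    by_contra hc
    have h0 : ∀ q : ℝ, μ {x | f x ≤ q} = 0 := by
      intro q
      rcases hlev q with h | h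
      · exact h
      · exact absurd (⟨q, h⟩ : T.Nonempty) hc
    have huniv : (Set.univ : Set X) ⊆ ⋃ n : ℕ, {x | f x ≤ (n : ℝ)} := by
      intro x _
      obtain ⟨n, hn⟩ := exists_nat_ge (f x)
      exact Set.mem_iUnion.2 ⟨n, hn⟩
    have : μ (Set.univ : Set X) = 0 :=
      measure_mono_null huniv (measure_iUnion_null fun n => h0 n)
    simp at this
  have hbdd : BddBelow T := by
    by_contra hc
    have hmem : ∀ n : ℕ, (-(n : ℝ)) ∈ T := by
      intro n
      obtain ⟨q, hqT, hq⟩ := not_bddBelow_iff.1 hc (-(n : ℝ))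
      exact hup q hqT _ (le_of_lt hq)
    have hnull : μ (⋃ n : ℕ, {x | f x ≤ -(n : ℝ)}ᶜ) = 0 := by
      refine measure_iUnion_null fun n => ?_
      exact (prob_compl_eq_zero_iff (hf measurableSet_Iic)).2 (hmem n)
    have hsub : (Set.univ : Set X) ⊆ ⋃ n : ℕ, {x | f x ≤ -(n : ℝ)}ᶜ := by
      intro x _
      obtain ⟨n, hn⟩ := exists_nat_gt (-(f x))
      refine Set.mem_iUnion.2 ⟨n, ?_⟩
      simp only [Set.mem_compl_iff, Set.mem_setOf_eq, not_le]
      linarith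
    have : μ (Set.univ : Set X) = 0 := measure_mono_null hsub hnull
    simp at this
  set c : ℝ := sInf T with hc
  have hmem' : ∀ n : ℕ, μ {x | f x ≤ c + 1 / ((n : ℝ) + 1)} = 1 := by
    intro n
    have hlt : sInf T < c + 1 / ((n : ℝ) + 1) := by
      rw [← hc]
      nlinarith [Nat.one_div_pos_of_nat (α := ℝ) (n := n)]
    obtain ⟨q, hqT, hq⟩ := exists_lt_of_csInf_lt hne hlt
    exact hup q hqT _ (le_of_lt hq)
  have hle1 : μ {x | f x ≤ c} = 1 := by
    have hEq : {x | f x ≤ c} = ⋂ n : ℕ, {x | f x ≤ c + 1 / ((n : ℝ) + 1)} := by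
      ext x
      simp only [Set.mem_setOf_eq, Set.mem_iInter]
      constructor
      · intro h n
        nlinarith [Nat.one_div_pos_of_nat (α := ℝ) (n := n)]
      · intro h
        by_contra hlt
        push_neg at hlt
        obtain ⟨n, hn⟩ := exists_nat_one_div_lt (sub_pos.2 hlt)
        have := h n
        linarith
    rw [hEq]
    refine (prob_compl_eq_zero_iff
      (MeasurableSet.iInter fun n : ℕ => hf measurableSet_Iic)).1 ?_
    rw [Set.compl_iInter]
    refine measure_iUnion_null fun n => ?_
    exact (prob_compl_eq_zero_iff (hf measurableSet_Iic)).2 (hmem' n)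
  have hlt0 : μ {x | f x < c} = 0 := by
    have hEq : {x | f x < c} = ⋃ n : ℕ, {x | f x ≤ c - 1 / ((n : ℝ) + 1)} := by
      ext x
      simp only [Set.mem_setOf_eq, Set.mem_iUnion]
      constructor
      · intro h
        obtain ⟨n, hn⟩ := exists_nat_one_div_lt (sub_pos.2 h)
        exact ⟨n, by linarith⟩
      · rintro ⟨n, hn⟩
        nlinarith [Nat.one_div_pos_of_nat (α := ℝ) (n := n)]
    rw [hEq]
    refine measure_iUnion_null fun n => ?_
    rcases hlev (c - 1 / ((n : ℝ) + 1)) with h | h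
    · exact h
    · exfalso
      have : c ≤ c - 1 / ((n : ℝ) + 1) := csInf_le hbdd h
      nlinarith [Nat.one_div_pos_of_nat (α := ℝ) (n := n)]
  refine ⟨c, ?_⟩
  rw [Filter.EventuallyEq, ae_iff]
  refine measure_mono_null (fun x hx => ?_)
    (measure_union_null hlt0 ((prob_compl_eq_zero_iff (hf measurableSet_Iic)).2 hle1))
  simp only [Set.mem_setOf_eq] at hx
  rcases lt_or_gt_of_ne hx with h | h
  · exact Or.inl h
  · exact Or.inr (by
      simp only [Set.mem_compl_iff, Set.mem_preimage, Set.mem_setOf_eq, Set.mem_Iic, not_le]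
      exact h)

end aux

/-- Let `(A,B)` be an ergodic p.m.p. action of `G × H` on a standard probability space
`(X,μ)`. Then the composition of the conditional expectations onto the σ-algebra `E_A` of
`A`-invariant sets and then onto the σ-algebra `E_B` of `B`-invariant sets is integration:
for every `ψ ∈ L¹(X,μ)`, `E[E[ψ | E_A] | E_B] = ∫ ψ dμ` almost everywhere. -/
theorem statement6 {G H X : Type*} [Group G] [Group H] [Countable G] [Countable H]
    [MeasurableSpace X] [StandardBorelSpace X]
    (μ : Measure X) [IsProbabilityMeasure μ]
    (A : G →* Equiv.Perm X) (B : H →* Equiv.Perm X)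
    (hA : ∀ g : G, MeasurePreserving (A g) μ μ)
    (hB : ∀ h : H, MeasurePreserving (B h) μ μ)
    (hcomm : ∀ (g : G) (h : H) (x : X), A g (B h x) = B h (A g x))
    (herg : ∀ D : Set X, MeasurableSet D →
      (∀ g : G, μ ((⇑(A g) '' D) ∆ D) = 0) →
      (∀ h : H, μ ((⇑(B h) '' D) ∆ D) = 0) → μ D = 0 ∨ μ D = 1)
    (ψ : X → ℝ) (hψ : Integrable ψ μ) :
    μ[ μ[ψ | invariantAlg μ (fun g : G => A g)] | invariantAlg μ (fun h : H => B h)]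
      =ᵐ[μ] fun _ => ∫ x, ψ x ∂μ := by
  have charA : ∀ D : Set X,
      MeasurableSet[invariantAlg μ (fun g : G => A g)] D ↔
      (MeasurableSet D ∧ ∀ g : G, μ ((⇑(A g) ⁻¹' D) ∆ D) = 0) :=
    fun D => aux_measurableSet_invariantAlg A D
  have charB : ∀ D : Set X,
      MeasurableSet[invariantAlg μ (fun h : H => B h)] D ↔
      (MeasurableSet D ∧ ∀ h : H, μ ((⇑(B h) ⁻¹' D) ∆ D) = 0) :=
    fun D => aux_measurableSet_invariantAlg B D
  have hmA : invariantAlg μ (fun g : G => A g) ≤ (inferInstance : MeasurableSpace X) :=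
    fun s hs => ((charA s).1 hs).1
  have hmB : invariantAlg μ (fun h : H => B h) ≤ (inferInstance : MeasurableSpace X) :=
    fun s hs => ((charB s).1 hs).1
  haveI : SigmaFinite (μ.trim hmA) := inferInstance
  haveI : SigmaFinite (μ.trim hmB) := inferInstance
  set φ : X → ℝ := μ[ψ | (invariantAlg μ (fun g : G => A g))] with hφdef
  set f : X → ℝ := μ[φ | (invariantAlg μ (fun h : H => B h))] with hfdef
  have hφint : Integrable φ μ := integrable_condExp
  have hfint : Integrable f μ := integrable_condExp
  -- measurable equivalences from measure preservation
  have hAmeas : ∀ g : G, Measurable (A g : X → X) := fun g => (hA g).measurable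
  let Ameq : G → X ≃ᵐ X := fun g =>
    { toEquiv := (A g : Equiv.Perm X)
      measurable_toFun := hAmeas g
      measurable_invFun := by
        have : ⇑(A g).symm = ⇑(A g⁻¹) := by rw [map_inv]; rfl
        have h2 := hAmeas g⁻¹
        rw [← this] at h2
        exact h2 }
  -- φ is a.e. A-invariant
  have hφinv : ∀ g : G, (fun x => φ (A g x)) =ᵐ[μ] φ := by
    intro g
    exact aux_comp_ae_eq (fun D hD => ((charA D).1 hD).2 g)
      (stronglyMeasurable_condExp.measurable)
  -- (invariantAlg μ (fun h : H => B h)) is stable under preimages by A g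
  have hstab : ∀ (g : G) (D : Set X), MeasurableSet[(invariantAlg μ (fun h : H => B h))] D →
      MeasurableSet[(invariantAlg μ (fun h : H => B h))] (⇑(A g) ⁻¹' D) := by
    intro g D hD
    obtain ⟨hDm, hDB⟩ := (charB D).1 hD
    refine (charB _).2 ⟨hAmeas g hDm, fun h => ?_⟩
    have hEq : (⇑(B h) ⁻¹' (⇑(A g) ⁻¹' D)) ∆ (⇑(A g) ⁻¹' D)
        = ⇑(A g) ⁻¹' ((⇑(B h) ⁻¹' D) ∆ D) := by
      have h1 : ⇑(B h) ⁻¹' (⇑(A g) ⁻¹' D) = ⇑(A g) ⁻¹' (⇑(B h) ⁻¹' D) := by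
        ext x
        simp only [Set.mem_preimage]
        rw [hcomm g h x]
      rw [h1, Set.preimage_symmDiff]
    rw [hEq, (hA g).measure_preimage
      (((hB h).measurable hDm).symmDiff hDm).nullMeasurableSet]
    exact hDB h
  -- f is a.e. A-invariant: condexp onto (invariantAlg μ (fun h : H => B h)) commutes with the Koopman operator of A
  have hfinv : ∀ g : G, (fun x => f (A g x)) =ᵐ[μ] f := by
    intro g
    have hfmB : Measurable[(invariantAlg μ (fun h : H => B h))] f := stronglyMeasurable_condExp.measurable
    have hAmB : @Measurable X X (invariantAlg μ (fun h : H => B h)) (invariantAlg μ (fun h : H => B h)) (A g : X → X) := fun s hs => hstab g s hs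
    have hcomp : (fun x => f (A g x)) =ᵐ[μ] μ[φ | (invariantAlg μ (fun h : H => B h))] := by
      refine ae_eq_condExp_of_forall_setIntegral_eq hmB hφint ?_ ?_ ?_
      · intro s _ _
        exact (((hA g).integrable_comp_emb (Ameq g).measurableEmbedding).2 hfint).integrableOn
      · intro s hs _
        have ht : MeasurableSet[(invariantAlg μ (fun h : H => B h))] (⇑(A g⁻¹) ⁻¹' s) := hstab g⁻¹ s hs
        have hts : ⇑(A g) ⁻¹' (⇑(A g⁻¹) ⁻¹' s) = s := by
          ext x
          simp only [Set.mem_preimage, ← Equiv.Perm.mul_apply, ← map_mul,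
            inv_mul_cancel, map_one, Equiv.Perm.coe_one, id_eq]
        calc ∫ x in s, f (A g x) ∂μ
            = ∫ x in ⇑(A g) ⁻¹' (⇑(A g⁻¹) ⁻¹' s), f (A g x) ∂μ := by rw [hts]
          _ = ∫ y in ⇑(A g⁻¹) ⁻¹' s, f y ∂μ :=
              (hA g).setIntegral_preimage_emb (Ameq g).measurableEmbedding f _
          _ = ∫ y in ⇑(A g⁻¹) ⁻¹' s, φ y ∂μ := setIntegral_condExp hmB hφint ht
          _ = ∫ x in ⇑(A g) ⁻¹' (⇑(A g⁻¹) ⁻¹' s), φ (A g x) ∂μ :=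
              ((hA g).setIntegral_preimage_emb (Ameq g).measurableEmbedding φ _).symm
          _ = ∫ x in s, φ (A g x) ∂μ := by rw [hts]
          _ = ∫ x in s, φ x ∂μ := integral_congr_ae (ae_restrict_of_ae (hφinv g))
      · exact ((hfmB.comp hAmB).stronglyMeasurable).aestronglyMeasurable
    exact hcomp.trans (by rw [← hfdef])
  -- sublevel sets of f are jointly a.e. invariant, hence trivial by ergodicity
  have hlev : ∀ q : ℝ, μ {x | f x ≤ q} = 0 ∨ μ {x | f x ≤ q} = 1 := by
    intro q
    have hfSM : StronglyMeasurable[(invariantAlg μ (fun h : H => B h))] f :=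
      stronglyMeasurable_condExp
    have hDmB : MeasurableSet[(invariantAlg μ (fun h : H => B h))] {x | f x ≤ q} :=
      hfSM.measurable measurableSet_Iic
    obtain ⟨hDm, hDB⟩ := (charB _).1 hDmB
    have hDA : ∀ g : G, μ ((⇑(A g) ⁻¹' {x | f x ≤ q}) ∆ {x | f x ≤ q}) = 0 := by
      intro g
      have hnull : μ {x | ¬ f (A g x) = f x} = 0 := by
        have := hfinv g
        rwa [Filter.EventuallyEq, ae_iff] at this
      refine measure_mono_null (fun x hx => ?_) hnull
      rw [Set.mem_symmDiff] at hx
      simp only [Set.mem_preimage, Set.mem_setOf_eq] at hx ⊢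
      rcases hx with ⟨h1, h2⟩ | ⟨h1, h2⟩
      · exact fun hfe => h2 (hfe ▸ h1)
      · exact fun hfe => h2 (hfe.symm ▸ h1)
    exact herg _ hDm ((aux_image_iff_preimage A _).2 hDA)
      ((aux_image_iff_preimage B _).2 hDB)
  -- f is a.e. constant
  obtain ⟨c, hfc⟩ := aux_ae_const
    (stronglyMeasurable_condExp.measurable.mono hmB le_rfl) hlev
  -- identify the constant via integration
  have hcval : c = ∫ x, ψ x ∂μ := by
    have h1 : ∫ x, f x ∂μ = ∫ x, ψ x ∂μ := by
      rw [hfdef]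
      rw [integral_condExp hmB, hφdef, integral_condExp hmA]
    have h2 : ∫ x, f x ∂μ = c := by
      rw [integral_congr_ae hfc]
      simp
    rw [← h2, h1]
  exact hfc.trans (by rw [hcval])
end
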